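/- arXiv:2005.05309 — 3 statements merged into one kernel-verified Lean document; each statement's English description precedes it below -/
import Mathlib

section
/- Let t ∈ [0,T], let f : Λ^t → ℝ be upper semicontinuous with respect to d_∞ and bounded from above, let ρ be a gauge-type function on Λ^t, let (δ_i)_{i≥0} be a sequence of positive numbers, and suppose ε > 0 and (t_0, γ⁰_{t_0}) ∈ [t,T]×Λ^t satisfy f(γ⁰_{t_0}) ≥ sup_{(s,γ_s)∈[t,T]×Λ^t} f(γ_s) − ε. Then there exist (t̂, γ̂_{t̂}) ∈ [t,T]×Λ^t and a sequence (t_i, γⁱ_{t_i})_{i≥1} ⊆ [t,T]×Λ^t such that: (i) ρ(γ⁰_{t_0}, γ̂_{t̂}) ≤ ε/δ_0, ρ(γⁱ_{t_i}, γ̂_{t̂}) ≤ ε/(2ⁱ δ_0) for every i ≥ 1, and t_i increases monotonically to t̂ as i → ∞; (ii) the series Σ_{i=0}^∞ δ_i ρ(γⁱ_{t_i}, γ̂_{t̂}) converges and f(γ̂_{t̂}) − Σ_{i=0}^∞ δ_i ρ(γⁱ_{t_i}, γ̂_{t̂}) ≥ f(γ⁰_{t_0}); (iii) for every (s, γ_s)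 ∈ [t̂,T]×Λ^{t̂} with (s,γ_s) ≠ (t̂, γ̂_{t̂}): f(γ_s) − Σ_{i=0}^∞ δ_i ρ(γⁱ_{t_i}, γ_s) < f(γ̂_{t̂}) − Σ_{i=0}^∞ δ_i ρ(γⁱ_{t_i}, γ̂_{t̂}). -/
set_option linter.unusedVariables false

noncomputable section

open Set Filter Topology

namespace PHJB

/-- Euclidean state space ℝ^d. -/
abbrev E (d : ℕ) : Type := EuclideanSpace ℝ (Fin d)

variable {d n : ℕ}

/-- `‖γ_t - η_s‖₀ = sup_{0 ≤ l ≤ t ∨ s} |γ_t(l ∧ t) - η_s(l ∧ s)|`. -/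
def pairDist (t : ℝ) (γ : ℝ → E d) (s : ℝ) (η : ℝ → E d) : ℝ :=
  sSup ((fun l => ‖γ (min l t) - η (min l s)‖) '' Icc 0 (max t s))

/-- `‖γ_t‖₀ = sup_{0 ≤ s ≤ t} |γ_t(s)|`. -/
def supNorm (t : ℝ) (γ : ℝ → E d) : ℝ :=
  sSup ((fun l => ‖γ l‖) '' Icc 0 t)

/-- `d_∞(γ_t, η_s) = |t - s| + ‖γ_t - η_s‖₀`. -/
def dInfty (t : ℝ) (γ : ℝ → E d) (s : ℝ) (η : ℝ → E d) : ℝ :=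
  |t - s| + pairDist t γ s η

/-- `γ` is càdlàg on `[0,t]`. -/
def IsCadlagOn (t : ℝ) (γ : ℝ → E d) : Prop :=
  (∀ s ∈ Ico (0:ℝ) t, ContinuousWithinAt γ (Ici s) s) ∧
  (∀ s ∈ Ioc (0:ℝ) t, ∃ L, Tendsto γ (nhdsWithin s (Iio s)) (nhds L))

/-- `γ` is continuous on `[0,t]`. -/
def IsContOn (t : ℝ) (γ : ℝ → E d) : Prop :=
  ContinuousOn γ (Icc 0 t)

/-- `(t, γ)` represents an element `γ_t` of `Λ̂^{tBase}` (horizon `T`). -/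
def MemHat (T tBase : ℝ) (t : ℝ) (γ : ℝ → E d) : Prop :=
  tBase ≤ t ∧ t ≤ T ∧ IsCadlagOn t γ

/-- `(t, γ)` represents an element `γ_t` of `Λ^{tBase}` (horizon `T`). -/
def Mem (T tBase : ℝ) (t : ℝ) (γ : ℝ → E d) : Prop :=
  tBase ≤ t ∧ t ≤ T ∧ IsContOn t γ

/-- The functional `S_m(γ_t, η_s)`. -/
def Sm (m : ℕ) (t : ℝ) (γ : ℝ → E d) (s : ℝ) (η : ℝ → E d) : ℝ :=
  if pairDist t γ s η = 0 then 0
  else (pairDist t γ s η ^ (2*m) - ‖γ t - η s‖ ^ (2*m)) ^ 3 / pairDist t γ s η ^ (4*m)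

/-- `Υ^{m,M}(γ_t, η_s) = S_m(γ_t,η_s) + M |γ_t(t) - η_s(s)|^{2m}`. -/
def Ups (m : ℕ) (M : ℝ) (t : ℝ) (γ : ℝ → E d) (s : ℝ) (η : ℝ → E d) : ℝ :=
  Sm m t γ s η + M * ‖γ t - η s‖ ^ (2*m)

/-- `Ῡ^{m,M}(γ_t, η_s) = Υ^{m,M}(γ_t,η_s) + |s - t|²`. -/
def UpsBar (m : ℕ) (M : ℝ) (t : ℝ) (γ : ℝ → E d) (s : ℝ) (η : ℝ → E d) : ℝ :=
  Ups m M t γ s η + (s - t) ^ 2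

/-- `Υ^{m,M}(γ_t) = Υ^{m,M}(γ_t, 0_t)`. -/
def Ups0 (m : ℕ) (M : ℝ) (t : ℝ) (γ : ℝ → E d) : ℝ :=
  Ups m M t γ t (fun _ => 0)

/-- Restriction of a raw function to the values it takes on `[0,t]` (the path `γ_t`,
or its horizontal extension to any later time). -/
def clamp (t : ℝ) (γ : ℝ → E d) : ℝ → E d := fun s => γ (min (max s 0) t)

/-- The horizontal extension `γ_{t,·}` of `γ_t`, as a raw function. -/
def hext (t : ℝ) (γ : ℝ → E d) : ℝ → E d := fun l => γ (min l t)

/-- The vertically bumped path `γ_t^x`. -/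
def vbump (t : ℝ) (γ : ℝ → E d) (x : E d) : ℝ → E d :=
  fun s => if s = t then γ t + x else γ s

/-- The standard basis of ℝ^d. -/
def basis (d : ℕ) (i : Fin d) : E d := EuclideanSpace.single i (1:ℝ)

/-- A path functional only depends on the restriction of the path to `[0,t]`. -/
def Adapted (T tBase : ℝ) (f : ℝ → (ℝ → E d) → ℝ) : Prop :=
  ∀ t γ, MemHat T tBase t γ → f t γ = f t (clamp t γ)

/-- `f ∈ C⁰(Λ̂^{tBase})`: continuity with respect to `d_∞`. -/
def C0Hat (T tBase : ℝ) (f : ℝ → (ℝ → E d) → ℝ) : Prop :=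
  ∀ t γ, MemHat T tBase t γ → ∀ ε > 0, ∃ δ > 0, ∀ s η, MemHat T tBase s η →
    dInfty t γ s η < δ → |f s η - f t γ| < ε

/-- `f ∈ C⁰(Λ^{tBase})`: continuity with respect to `d_∞` on continuous paths. -/
def C0Lam (T tBase : ℝ) (f : ℝ → (ℝ → E d) → ℝ) : Prop :=
  ∀ t γ, Mem T tBase t γ → ∀ ε > 0, ∃ δ > 0, ∀ s η, Mem T tBase s η →
    dInfty t γ s η < δ → |f s η - f t γ| < ε

/-- Polynomial growth in `‖·‖₀`. -/
def PolyGrowth (T tBase : ℝ) (f : ℝ → (ℝ → E d) → ℝ) : Prop :=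
  ∃ C : ℝ, ∃ k : ℕ, 0 ≤ C ∧ ∀ t γ, MemHat T tBase t γ →
    |f t γ| ≤ C * (1 + supNorm t γ) ^ k

/-- An element of `C_p^{1,2}(Λ̂^{tBase})`: a functional `F` together with its
horizontal derivative `Ft`, and first and second vertical derivatives `Fx`, `Fxx`,
all continuous in `d_∞` and of polynomial growth. -/
structure C12pHat (d : ℕ) (T tBase : ℝ) where
  F : ℝ → (ℝ → E d) → ℝ
  Ft : ℝ → (ℝ → E d) → ℝ
  Fx : ℝ → (ℝ → E d) → E d
  Fxx : ℝ → (ℝ → E d) → Matrix (Fin d) (Fin d) ℝ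
  adapted : Adapted T tBase F
  contF : C0Hat T tBase F
  vert : ∀ t γ, MemHat T tBase t γ → ∀ i : Fin d,
    HasDerivAt (fun h : ℝ => F t (vbump t γ (h • basis d i))) (Fx t γ i) 0
  vert2 : ∀ t γ, MemHat T tBase t γ → ∀ i j : Fin d,
    HasDerivAt (fun h : ℝ => Fx t (vbump t γ (h • basis d j)) i) (Fxx t γ j i) 0
  horiz : ∀ t γ, MemHat T tBase t γ → t < T →
    Tendsto (fun h : ℝ => (F (t + h) (clamp t γ) - F t γ) / h)
      (nhdsWithin 0 (Ioi 0)) (nhds (Ft t γ))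
  horizT : ∀ γ, MemHat T tBase T γ →
    Tendsto (fun s => Ft s (clamp s γ)) (nhdsWithin T (Iio T)) (nhds (Ft T γ))
  contFt : C0Hat T tBase Ft
  contFx : ∀ i : Fin d, C0Hat T tBase fun t γ => Fx t γ i
  contFxx : ∀ i j : Fin d, C0Hat T tBase fun t γ => Fxx t γ i j
  growthF : PolyGrowth T tBase F
  growthFt : PolyGrowth T tBase Ft
  growthFx : ∀ i : Fin d, PolyGrowth T tBase fun t γ => Fx t γ i
  growthFxx : ∀ i j : Fin d, PolyGrowth T tBase fun t γ => Fxx t γ i j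

/-- Hilbert–Schmidt (Frobenius) norm of a matrix. -/
def frob {k l : ℕ} (A : Matrix (Fin k) (Fin l) ℝ) : ℝ :=
  Real.sqrt (∑ i, ∑ j, (A i j) ^ 2)

/-- Identification of `Fin k → ℝ` with `EuclideanSpace ℝ (Fin k)`. -/
def toEuc {k : ℕ} (v : Fin k → ℝ) : E k := (WithLp.equiv 2 (Fin k → ℝ)).symm v

/-- The Hamiltonian
`H(γ_t,r,p,l) = sup_u [⟨p, b⟩ + ½ tr(l σ σ^⊤) + q(γ_t, r, σ^⊤ p, u)]`. -/
def hamiltonian (U : Type*) (b : ℝ → (ℝ → E d) → U → E d)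
    (σ' : ℝ → (ℝ → E d) → U → Matrix (Fin d) (Fin n) ℝ)
    (q : ℝ → (ℝ → E d) → ℝ → E n → U → ℝ)
    (t : ℝ) (γ : ℝ → E d) (r : ℝ) (p : E d) (l : Matrix (Fin d) (Fin d) ℝ) : ℝ :=
  ⨆ u : U, ((∑ i, p i * b t γ u i)
    + (1/2) * Matrix.trace (l * (σ' t γ u * (σ' t γ u).transpose))
    + q t γ r (toEuc ((σ' t γ u).transpose.mulVec (fun i => p i))) u)

/-- Hypothesis 2.1 on the coefficients, with Lipschitz/growth constant `L`. -/
structure Hyp (T : ℝ) {d n : ℕ} (U : Type*) [MetricSpace U] (L : ℝ)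
    (b : ℝ → (ℝ → E d) → U → E d)
    (σ' : ℝ → (ℝ → E d) → U → Matrix (Fin d) (Fin n) ℝ)
    (q : ℝ → (ℝ → E d) → ℝ → E n → U → ℝ)
    (φ : (ℝ → E d) → ℝ) : Prop where
  hL : 0 < L
  cont_b : ∀ t γ u, Mem T 0 t γ → ∀ ε > 0, ∃ δ > 0, ∀ s η v, Mem T 0 s η →
    dInfty t γ s η + dist u v < δ → ‖b s η v - b t γ u‖ < ε
  cont_σ : ∀ t γ u, Mem T 0 t γ → ∀ ε > 0, ∃ δ > 0, ∀ s η v, Mem T 0 s η →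
    dInfty t γ s η + dist u v < δ → frob (σ' s η v - σ' t γ u) < ε
  cont_q : ∀ t γ (y : ℝ) (z : E n) u, Mem T 0 t γ → ∀ ε > 0, ∃ δ > 0,
    ∀ s η (y' : ℝ) (z' : E n) v, Mem T 0 s η →
      dInfty t γ s η + |y' - y| + ‖z' - z‖ + dist u v < δ →
      |q s η y' z' v - q t γ y z u| < ε
  cont_φ : ∀ γ, IsContOn T γ → ∀ ε > 0, ∃ δ > 0, ∀ η, IsContOn T η →
    pairDist T γ T η < δ → |φ η - φ γ| < ε
  bound_b : ∀ t γ u, Mem T 0 t γ → ‖b t γ u‖ ^ 2 ≤ L ^ 2 * (1 + supNorm t γ ^ 2)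
  bound_σ : ∀ t γ u, Mem T 0 t γ → frob (σ' t γ u) ^ 2 ≤ L ^ 2 * (1 + supNorm t γ ^ 2)
  lip_b : ∀ t γ γ' u, Mem T 0 t γ → Mem T 0 t γ' →
    ‖b t γ u - b t γ' u‖ ≤ L * pairDist t γ t γ'
  lip_σ : ∀ t γ γ' u, Mem T 0 t γ → Mem T 0 t γ' →
    frob (σ' t γ u - σ' t γ' u) ≤ L * pairDist t γ t γ'
  bound_q : ∀ t γ y z u, Mem T 0 t γ → |q t γ y z u| ≤ L * (1 + supNorm t γ + |y| + ‖z‖)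
  lip_q : ∀ t γ γ' y y' z z' u, Mem T 0 t γ → Mem T 0 t γ' →
    |q t γ y z u - q t γ' y' z' u| ≤ L * (pairDist t γ t γ' + |y - y'| + ‖z - z'‖)
  lip_φ : ∀ γ η, IsContOn T γ → IsContOn T η → |φ γ - φ η| ≤ L * pairDist T γ T η

/-- `Φ ∈ A⁺(γ_t, w)`: `0 = (w - Φ)(γ_t) = sup_{[t,T]×Λ} (w - Φ)`. -/
def InAplus (T t : ℝ) (w : ℝ → (ℝ → E d) → ℝ) (γ : ℝ → E d) (Φ : C12pHat d T t) : Prop :=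
  w t γ - Φ.F t γ = 0 ∧ ∀ s η, Mem T t s η → w s η - Φ.F s η ≤ 0

/-- `Φ ∈ A⁻(γ_t, w)`: `0 = (w + Φ)(γ_t) = inf_{[t,T]×Λ} (w + Φ)`. -/
def InAminus (T t : ℝ) (w : ℝ → (ℝ → E d) → ℝ) (γ : ℝ → E d) (Φ : C12pHat d T t) : Prop :=
  w t γ + Φ.F t γ = 0 ∧ ∀ s η, Mem T t s η → 0 ≤ w s η + Φ.F s η

/-- Viscosity subsolution of the PHJB equation. -/
def IsViscSubsol (T : ℝ) (U : Type*)
    (b : ℝ → (ℝ → E d) → U → E d)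
    (σ' : ℝ → (ℝ → E d) → U → Matrix (Fin d) (Fin n) ℝ)
    (q : ℝ → (ℝ → E d) → ℝ → E n → U → ℝ)
    (φ : (ℝ → E d) → ℝ)
    (w : ℝ → (ℝ → E d) → ℝ) : Prop :=
  (∀ γ, IsContOn T γ → w T γ ≤ φ γ) ∧
  ∀ t γ, Mem T 0 t γ → t < T → ∀ Φ : C12pHat d T t,
    InAplus T t w γ Φ →
    0 ≤ Φ.Ft t γ + hamiltonian U b σ' q t γ (Φ.F t γ) (Φ.Fx t γ) (Φ.Fxx t γ)

/-- Viscosity supersolution of the PHJB equation. -/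
def IsViscSupersol (T : ℝ) (U : Type*)
    (b : ℝ → (ℝ → E d) → U → E d)
    (σ' : ℝ → (ℝ → E d) → U → Matrix (Fin d) (Fin n) ℝ)
    (q : ℝ → (ℝ → E d) → ℝ → E n → U → ℝ)
    (φ : (ℝ → E d) → ℝ)
    (w : ℝ → (ℝ → E d) → ℝ) : Prop :=
  (∀ γ, IsContOn T γ → φ γ ≤ w T γ) ∧
  ∀ t γ, Mem T 0 t γ → t < T → ∀ Φ : C12pHat d T t,
    InAminus T t w γ Φ →
    -Φ.Ft t γ + hamiltonian U b σ' q t γ (-(Φ.F t γ)) (-(Φ.Fx t γ)) (-(Φ.Fxx t γ)) ≤ 0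

/-- Gauge-type function on `Λ^{tBase}`. -/
def IsGaugeType (T tBase : ℝ) (ρ : ℝ → (ℝ → E d) → ℝ → (ℝ → E d) → ℝ) : Prop :=
  (∀ t γ s η, Mem T tBase t γ → Mem T tBase s η → 0 ≤ ρ t γ s η) ∧
  (∀ t γ s η, Mem T tBase t γ → Mem T tBase s η → ∀ ε > 0, ∃ δ > 0,
    ∀ t' γ' s' η', Mem T tBase t' γ' → Mem T tBase s' η' →
      dInfty t γ t' γ' + dInfty s η s' η' < δ →
      |ρ t' γ' s' η' - ρ t γ s η| < ε) ∧
  (∀ s γ, Mem T tBase s γ → ρ s γ s γ = 0) ∧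
  (∀ ε > 0, ∃ δ > 0, ∀ s γ l η, Mem T tBase s γ → Mem T tBase l η →
    ρ s γ l η ≤ δ → dInfty s γ l η < ε)

/-- Upper semicontinuity (w.r.t. `d_∞`) of a path functional. -/
def PathUSC (T tBase : ℝ) (w : ℝ → (ℝ → E d) → ℝ) : Prop :=
  ∀ t γ, Mem T tBase t γ → ∀ c, w t γ < c → ∃ δ > 0, ∀ s η, Mem T tBase s η →
    dInfty t γ s η < δ → w s η < c

/-- Bounded from above. -/
def BddAbovePath (T tBase : ℝ) (w : ℝ → (ℝ → E d) → ℝ) : Prop :=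
  ∃ B, ∀ t γ, Mem T tBase t γ → w t γ ≤ B

/-- `limsup_{‖γ_t‖₀ → ∞} w(γ_t)/‖γ_t‖₀ < 0`. -/
def NegAtInfty (T : ℝ) (w : ℝ → (ℝ → E d) → ℝ) : Prop :=
  ∃ c > 0, ∃ R : ℝ, ∀ t γ, Mem T 0 t γ → R ≤ supNorm t γ → w t γ ≤ -c * supNorm t γ

/-- The function `w̃^{t̂}` of Definition 5.4. -/
def tilde (T tBase : ℝ) (w : ℝ → (ℝ → E d) → ℝ) : ℝ → E d → ℝ := fun t x =>
  if tBase ≤ t then sSup {r | ∃ ξ, Mem T tBase t ξ ∧ ξ t = x ∧ r = w t ξ}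
  else sSup {r | ∃ ξ, Mem T tBase tBase ξ ∧ ξ tBase = x ∧ r = w tBase ξ} - Real.sqrt (tBase - t)

/-- Upper semicontinuous envelope (on `[0,T] × ℝ^d`). -/
def uscEnv (T : ℝ) (g : ℝ → E d → ℝ) : ℝ → E d → ℝ := fun t x =>
  Filter.limsup (fun p : ℝ × E d => g p.1 p.2)
    (nhdsWithin (t, x) ((Icc (0:ℝ) T) ×ˢ (univ : Set (E d))))

/-- A local modulus of continuity. -/
def IsLocalModulus (ρ₁ : ℝ → ℝ → ℝ) : Prop :=
  Continuous (Function.uncurry ρ₁) ∧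
  (∀ r, 0 ≤ r → ρ₁ 0 r = 0) ∧
  (∀ a r, 0 ≤ a → 0 ≤ r → 0 ≤ ρ₁ a r) ∧
  (∀ a b r, 0 ≤ a → 0 ≤ b → 0 ≤ r → ρ₁ (a + b) r ≤ ρ₁ a r + ρ₁ b r) ∧
  (∀ a r r', 0 ≤ a → 0 ≤ r → r ≤ r' → ρ₁ a r ≤ ρ₁ a r')

/-- `(g, gt, gx, gxx)` is a `C^{1,2}` function on `[0,T] × ℝ^d` together with its
time derivative, spatial gradient and spatial Hessian. -/
def IsC12On (T : ℝ) (g gt : ℝ → E d → ℝ) (gx : ℝ → E d → E d)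
    (gxx : ℝ → E d → Matrix (Fin d) (Fin d) ℝ) : Prop :=
  Continuous (fun p : ℝ × E d => g p.1 p.2) ∧
  Continuous (fun p : ℝ × E d => gt p.1 p.2) ∧
  Continuous (fun p : ℝ × E d => gx p.1 p.2) ∧
  Continuous (fun p : ℝ × E d => gxx p.1 p.2) ∧
  (∀ t x, HasDerivAt (fun s => g s x) (gt t x) t) ∧
  (∀ t x (i : Fin d), HasDerivAt (fun h : ℝ => g t (x + h • basis d i)) (gx t x i) 0) ∧
  (∀ t x (i j : Fin d),
    HasDerivAt (fun h : ℝ => gx t (x + h • basis d j) i) (gxx t x j i) 0)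

/-- The class `Φ(t̂, x̂)` of Definition 5.3. -/
def InPhiClass (T : ℝ) (that : ℝ) (xhat : E d) (f : ℝ → E d → ℝ) : Prop :=
  ∃ r > 0, ∀ L > 0, ∀ g gt gx gxx, IsC12On T g gt gx gxx →
    ∃ C > 0, ∀ t x, 0 < t → t < T →
      (∀ s y, 0 ≤ s → s ≤ T → f s y - g s y ≤ f t x - g t x) →
      (|t - that| + ‖x - xhat‖ < r ∧ |f t x| + ‖gx t x‖ + frob (gxx t x) ≤ L) →
      C ≤ gt t x

/-- Bounded and uniformly continuous path functional on `Λ̂^{tBase}`. -/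
def UCBoundedHat (T tBase : ℝ) (f : ℝ → (ℝ → E d) → ℝ) : Prop :=
  (∃ B, ∀ t γ, MemHat T tBase t γ → |f t γ| ≤ B) ∧
  ∀ ε > 0, ∃ δ > 0, ∀ t γ s η, MemHat T tBase t γ → MemHat T tBase s η →
    dInfty t γ s η < δ → |f t γ - f s η| < ε

/-- Basis of ℝ^d × ℝ^d indexed by `Fin d ⊕ Fin d`. -/
def basisProd (d : ℕ) (v : Fin d ⊕ Fin d) : E d × E d :=
  Sum.elim (fun i => (basis d i, 0)) (fun j => (0, basis d j)) v

/-- The full Hessian `∇²φ` of `φ : ℝ^d × ℝ^d → ℝ` as a `(2d) × (2d)` matrix. -/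
def hess2 (φ : E d × E d → ℝ) (p : E d × E d) :
    Matrix (Fin d ⊕ Fin d) (Fin d ⊕ Fin d) ℝ :=
  Matrix.of fun v w => fderiv ℝ (fun x => fderiv ℝ φ x (basisProd d w)) p (basisProd d v)

/-- `∇_{x₁}φ`. -/
def grad1 (φ : E d × E d → ℝ) (p : E d × E d) : E d :=
  toEuc (fun i => fderiv ℝ φ p (basisProd d (Sum.inl i)))

/-- `∇_{x₂}φ`. -/
def grad2 (φ : E d × E d → ℝ) (p : E d × E d) : E d :=
  toEuc (fun i => fderiv ℝ φ p (basisProd d (Sum.inr i)))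

/-- Operator norm of a matrix, acting on Euclidean space. -/
def matOpNorm {ι : Type*} [Fintype ι] [DecidableEq ι] (A : Matrix ι ι ℝ) : ℝ :=
  ‖LinearMap.toContinuousLinearMap (Matrix.toEuclideanLin A)‖

/-- Matrix order `A ≤ B` in the sense of quadratic forms. -/
def matLE {ι : Type*} [Fintype ι] (A B : Matrix ι ι ℝ) : Prop :=
  (B - A).PosSemidef


/-- The state-dependent Hamiltonian `H̄(t,x,r,p,l)`. -/
def hamBar (U : Type*) {d n : ℕ} (bbar : ℝ → E d → U → E d)
    (σbar : ℝ → E d → U → Matrix (Fin d) (Fin n) ℝ)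
    (qbar : ℝ → E d → ℝ → E n → U → ℝ)
    (t : ℝ) (x : E d) (r : ℝ) (p : E d) (l : Matrix (Fin d) (Fin d) ℝ) : ℝ :=
  ⨆ u : U, ((∑ i, p i * bbar t x u i)
    + (1/2) * Matrix.trace (l * (σbar t x u * (σbar t x u).transpose))
    + qbar t x r (toEuc ((σbar t x u).transpose.mulVec (fun i => p i))) u)

/-!
Borwein–Preiss iteration. Starting from `γ⁰`, choose `γ^{k+1}` as a maximizer, up to `η_{k+1}`,
of the penalized functional `f - ∑_{i ≤ k} δᵢ ρ(γⁱ, ·)` on the improvement set `A_k` of paths not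
earlier than `γᵏ` at which this functional is at least its value at `γᵏ`. The sets `A_k` are
nested, and on `A_k` the `k`-th penalty is at most `η_k`, so `ρ(γᵏ, ·) ≤ ε / (2ᵏ δ₀)` there. By the
gauge property the sequence is `d_∞`-Cauchy; its times increase and its horizontally extended
paths converge uniformly, to `γ̂`. Upper semicontinuity of `f` and continuity of `ρ` put `γ̂` in
every `A_k`, which gives (i) and (ii); a later path lying in every `A_k` is `d_∞`-close to all
`γᵏ`, hence equal to `γ̂`, which gives (iii).
-/

theorem exists_seq_of_forall_exists_succ {α : Type*} {P : ℕ → α → Prop} {Q : ℕ → α → α → Prop}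
    {a : α} (ha : P 0 a) (h : ∀ k a, P k a → ∃ b, P (k + 1) b ∧ Q k a b) :
    ∃ s : ℕ → α, s 0 = a ∧ ∀ k, P k (s k) ∧ Q k (s k) (s (k + 1)) := by
  choose! next hnext using h
  let s : ℕ → α := fun k => Nat.rec a next k
  have hP : ∀ k, P k (s k) := fun k => by
    induction k with
    | zero => exact ha
    | succ k ih => exact (hnext k _ ih).1
  exact ⟨s, rfl, fun k => ⟨hP k, (hnext k _ (hP k)).2⟩⟩

theorem exists_le_add_of_bddAbove_image {X : Type*} {G : X → ℝ} {A : Set X} (hA : A.Nonempty)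
    (hG : BddAbove (G '' A)) {η : ℝ} (hη : 0 < η) : ∃ y ∈ A, ∀ x ∈ A, G x ≤ G y + η := by
  obtain ⟨_, ⟨y, hy, rfl⟩, hlt⟩ := exists_lt_of_lt_csSup (hA.image G) (sub_lt_self _ hη)
  exact ⟨y, hy, fun x hx => by linarith [le_csSup hG (mem_image_of_mem G hx)]⟩

section BorweinPreiss

variable {X : Type*} (M : Set X) (τ : X → ℝ) (F : X → ℝ) (R : X → X → ℝ) (δ η : ℕ → ℝ)

def penalized (p : ℕ → X) (k : ℕ) (x : X) : ℝ :=
  F x - ∑ i ∈ Finset.range (k + 1), δ i * R (p i) x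

def improvementSet (p : ℕ → X) (k : ℕ) : Set X :=
  {x ∈ M | τ (p k) ≤ τ x ∧ penalized F R δ p k (p k) ≤ penalized F R δ p k x}

structure IsBorweinPreissSeq (p : ℕ → X) : Prop where
  succ_mem : ∀ k, p (k + 1) ∈ improvementSet M τ F R δ p k
  le_succ_add : ∀ k, ∀ x ∈ improvementSet M τ F R δ p k,
    penalized F R δ p k x ≤ penalized F R δ p k (p (k + 1)) + η (k + 1)

theorem exists_isBorweinPreissSeq {x₀ : X} (hx₀ : x₀ ∈ M) (hF : BddAbove (F '' M))
    (hR : ∀ x ∈ M, ∀ y ∈ M, 0 ≤ R x y) (hδ : ∀ i, 0 ≤ δ i) (hη : ∀ k, 0 < η k) :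
    ∃ p, p 0 = x₀ ∧ IsBorweinPreissSeq M τ F R δ η p := by
  obtain ⟨B, hB⟩ := hF
  let A : X × (X → ℝ) → Set X := fun q => {y ∈ M | τ q.1 ≤ τ y ∧ F q.1 - q.2 q.1 ≤ F y - q.2 y}
  -- The state is a point together with the penalty accumulated so far, so that each step only
  -- depends on the current state.
  let P : ℕ → X × (X → ℝ) → Prop := fun _ q => q.1 ∈ M ∧ ∀ y ∈ M, 0 ≤ q.2 y
  let Q : ℕ → X × (X → ℝ) → X × (X → ℝ) → Prop := fun k q q' =>
    q'.2 = (fun y => q.2 y + δ (k + 1) * R q'.1 y) ∧ q'.1 ∈ A q ∧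
      ∀ x ∈ A q, F x - q.2 x ≤ F q'.1 - q.2 q'.1 + η (k + 1)
  have hstep : ∀ k q, P k q → ∃ q', P (k + 1) q' ∧ Q k q q' := by
    rintro k ⟨x, Φ⟩ ⟨hx, hΦ⟩
    have hbdd : BddAbove ((fun y => F y - Φ y) '' A (x, Φ)) := by
      refine ⟨B, ?_⟩
      rintro _ ⟨y, hy, rfl⟩
      linarith [hB (mem_image_of_mem F hy.1), hΦ y hy.1]
    have hxA : x ∈ A (x, Φ) := ⟨hx, le_rfl, le_rfl⟩
    obtain ⟨y, hy, hmax⟩ := exists_le_add_of_bddAbove_image ⟨x, hxA⟩ hbdd (hη (k + 1))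
    refine ⟨(y, fun z => Φ z + δ (k + 1) * R y z), ⟨hy.1, fun z hz => ?_⟩, rfl, hy, hmax⟩
    exact add_nonneg (hΦ z hz) (mul_nonneg (hδ _) (hR y hy.1 z hz))
  obtain ⟨s, hs0, hs⟩ := exists_seq_of_forall_exists_succ (P := P) (Q := Q)
    (a := (x₀, fun y => δ 0 * R x₀ y))
    ⟨hx₀, fun y hy => mul_nonneg (hδ 0) (hR x₀ hx₀ y hy)⟩ hstep
  have hpen : ∀ k, penalized F R δ (fun k => (s k).1) k = fun x => F x - (s k).2 x := by
    intro k
    induction k with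
    | zero => funext x; simp [penalized, hs0]
    | succ k ih =>
      funext x
      rw [(hs k).2.1]
      have := congrFun ih x
      simp only [penalized, Finset.sum_range_succ _ (k + 1)] at this ⊢
      linarith
  have hA : ∀ k, improvementSet M τ F R δ (fun k => (s k).1) k = A (s k) := by
    intro k
    simp only [improvementSet, hpen]
    rfl
  refine ⟨fun k => (s k).1, by simp [hs0], fun k => ?_, fun k => ?_⟩
  · rw [hA]; exact (hs k).2.2.1
  · rw [hA, hpen]; exact (hs k).2.2.2

variable {M τ F R δ η} {p : ℕ → X}

theorem penalized_succ (k : ℕ) (x : X) :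
    penalized F R δ p (k + 1) x = penalized F R δ p k x - δ (k + 1) * R (p (k + 1)) x := by
  simp only [penalized, Finset.sum_range_succ _ (k + 1)]
  ring

namespace IsBorweinPreissSeq

theorem mem (hp : IsBorweinPreissSeq M τ F R δ η p) (h₀ : p 0 ∈ M) : ∀ k, p k ∈ M
  | 0 => h₀
  | k + 1 => (hp.succ_mem k).1

theorem self_mem_improvementSet (hp : IsBorweinPreissSeq M τ F R δ η p) (h₀ : p 0 ∈ M) (k : ℕ) :
    p k ∈ improvementSet M τ F R δ p k :=
  ⟨hp.mem h₀ k, le_rfl, le_rfl⟩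

theorem penalized_succ_self (hp : IsBorweinPreissSeq M τ F R δ η p)
    (hR₀ : ∀ x ∈ M, R x x = 0) (k : ℕ) :
    penalized F R δ p (k + 1) (p (k + 1)) = penalized F R δ p k (p (k + 1)) := by
  rw [penalized_succ, hR₀ _ (hp.succ_mem k).1, mul_zero, sub_zero]

theorem improvementSet_succ_subset (hp : IsBorweinPreissSeq M τ F R δ η p)
    (hR₀ : ∀ x ∈ M, R x x = 0) (hR : ∀ x ∈ M, ∀ y ∈ M, 0 ≤ R x y) (hδ : ∀ i, 0 ≤ δ i) (k : ℕ) :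
    improvementSet M τ F R δ p (k + 1) ⊆ improvementSet M τ F R δ p k := by
  rintro x ⟨hxM, hτx, hx⟩
  obtain ⟨hpM, hτp, hp'⟩ := hp.succ_mem k
  have hpen : 0 ≤ δ (k + 1) * R (p (k + 1)) x := mul_nonneg (hδ _) (hR _ hpM x hxM)
  rw [hp.penalized_succ_self hR₀, penalized_succ] at hx
  exact ⟨hxM, hτp.trans hτx, by linarith⟩

theorem antitone_improvementSet (hp : IsBorweinPreissSeq M τ F R δ η p)
    (hR₀ : ∀ x ∈ M, R x x = 0) (hR : ∀ x ∈ M, ∀ y ∈ M, 0 ≤ R x y) (hδ : ∀ i, 0 ≤ δ i) :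
    Antitone (improvementSet M τ F R δ p) :=
  antitone_nat_of_succ_le (hp.improvementSet_succ_subset hR₀ hR hδ)

theorem mem_improvementSet (hp : IsBorweinPreissSeq M τ F R δ η p) (h₀ : p 0 ∈ M)
    (hR₀ : ∀ x ∈ M, R x x = 0) (hR : ∀ x ∈ M, ∀ y ∈ M, 0 ≤ R x y) (hδ : ∀ i, 0 ≤ δ i)
    {k j : ℕ} (hkj : k ≤ j) : p j ∈ improvementSet M τ F R δ p k :=
  hp.antitone_improvementSet hR₀ hR hδ hkj (hp.self_mem_improvementSet h₀ j)

theorem monotone_penalized_self (hp : IsBorweinPreissSeq M τ F R δ η p)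
    (hR₀ : ∀ x ∈ M, R x x = 0) : Monotone fun k => penalized F R δ p k (p k) :=
  monotone_nat_of_le_succ fun k => (hp.succ_mem k).2.2.trans (hp.penalized_succ_self hR₀ k).ge

theorem mul_le_of_mem_improvementSet (hp : IsBorweinPreissSeq M τ F R δ η p) (h₀ : p 0 ∈ M)
    (hR₀ : ∀ x ∈ M, R x x = 0) (hR : ∀ x ∈ M, ∀ y ∈ M, 0 ≤ R x y) (hδ : ∀ i, 0 ≤ δ i)
    (hnear : ∀ x ∈ M, F x ≤ F (p 0) + η 0) :
    ∀ k, ∀ x ∈ improvementSet M τ F R δ p k, δ k * R (p k) x ≤ η k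
  | 0, x, ⟨hxM, _, hx⟩ => by
    simp only [penalized, zero_add, Finset.sum_range_one, hR₀ _ h₀, mul_zero] at hx
    linarith [hnear x hxM]
  | k + 1, x, hx => by
    have hle := hp.le_succ_add k x (hp.improvementSet_succ_subset hR₀ hR hδ k hx)
    have hx' := hx.2.2
    rw [hp.penalized_succ_self hR₀, penalized_succ] at hx'
    linarith

theorem penalized_self_le_of_hasSum (hp : IsBorweinPreissSeq M τ F R δ η p)
    (hR₀ : ∀ x ∈ M, R x x = 0) {x : X} (hx : ∀ k, x ∈ improvementSet M τ F R δ p k) {S : ℝ}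
    (hS : HasSum (fun i => δ i * R (p i) x) S) (k : ℕ) :
    penalized F R δ p k (p k) ≤ F x - S := by
  have hlim : Tendsto (fun j => penalized F R δ p j x) atTop (𝓝 (F x - S)) :=
    tendsto_const_nhds.sub (hS.tendsto_sum_nat.comp (tendsto_add_atTop_nat 1))
  refine ge_of_tendsto hlim (eventually_atTop.2 ⟨k, fun j hkj => ?_⟩)
  exact (hp.monotone_penalized_self hR₀ hkj).trans (hx j).2.2

theorem sub_lt_of_notMem_improvementSet (hp : IsBorweinPreissSeq M τ F R δ η p)
    (h₀ : p 0 ∈ M) (hR₀ : ∀ x ∈ M, R x x = 0) (hR : ∀ x ∈ M, ∀ y ∈ M, 0 ≤ R x y)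
    (hδ : ∀ i, 0 ≤ δ i) {x : X} (hx : ∀ k, x ∈ improvementSet M τ F R δ p k) {S : ℝ}
    (hS : HasSum (fun i => δ i * R (p i) x) S) {y : X} (hyM : y ∈ M) (hτ : τ x ≤ τ y) {k : ℕ}
    (hyk : y ∉ improvementSet M τ F R δ p k) {S' : ℝ}
    (hS' : HasSum (fun i => δ i * R (p i) y) S') :
    F y - S' < F x - S := by
  have hlt : penalized F R δ p k y < penalized F R δ p k (p k) :=
    lt_of_not_ge fun hle => hyk ⟨hyM, (hx k).2.1.trans hτ, hle⟩
  have hpartial : ∑ i ∈ Finset.range (k + 1), δ i * R (p i) y ≤ S' :=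
    sum_le_hasSum _ (fun i _ => mul_nonneg (hδ i) (hR _ (hp.mem h₀ i) y hyM)) hS'
  have := hp.penalized_self_le_of_hasSum hR₀ hx hS k
  simp only [penalized] at hlt this ⊢
  linarith

end IsBorweinPreissSeq

end BorweinPreiss

section PathDistance

variable {t s r : ℝ} {γ η ζ : ℝ → E d}

theorem pairDist_nonneg : 0 ≤ pairDist t γ s η :=
  Real.sSup_nonneg (by rintro _ ⟨l, -, rfl⟩; exact norm_nonneg _)

theorem pairDist_self : pairDist t γ t γ = 0 := by
  rcases (Icc (0 : ℝ) t).eq_empty_or_nonempty with h | h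
  · simp [pairDist, h]
  · simp [pairDist, h.image_const]

theorem pairDist_comm : pairDist t γ s η = pairDist s η t γ := by
  simp only [pairDist, max_comm t s, norm_sub_rev]

theorem dInfty_nonneg : 0 ≤ dInfty t γ s η :=
  add_nonneg (abs_nonneg _) pairDist_nonneg

theorem dInfty_self : dInfty t γ t γ = 0 := by
  simp [dInfty, pairDist_self]

theorem dInfty_comm : dInfty t γ s η = dInfty s η t γ := by
  rw [dInfty, dInfty, abs_sub_comm, pairDist_comm]

theorem abs_sub_le_dInfty : |t - s| ≤ dInfty t γ s η :=
  le_add_of_nonneg_right pairDist_nonneg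

theorem pairDist_le (ht : 0 ≤ t) {C : ℝ}
    (h : ∀ l ∈ Icc (0 : ℝ) (max t s), ‖γ (min l t) - η (min l s)‖ ≤ C) :
    pairDist t γ s η ≤ C :=
  csSup_le ((nonempty_Icc.2 (le_max_of_le_left ht)).image _)
    (by rintro _ ⟨l, hl, rfl⟩; exact h l hl)

theorem continuous_clamp (ht : 0 ≤ t) (hγ : ContinuousOn γ (Icc 0 t)) : Continuous (clamp t γ) :=
  hγ.comp_continuous ((continuous_id.max continuous_const).min continuous_const)
    fun _ => ⟨le_min (le_max_right _ _) ht, min_le_right _ _⟩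

theorem pairDist_eq_sSup_clamp :
    pairDist t γ s η = sSup ((fun l => ‖clamp t γ l - clamp s η l‖) '' Icc 0 (max t s)) := by
  refine congrArg sSup (EqOn.image_eq fun l hl => ?_)
  simp [clamp, max_eq_left hl.1]

theorem norm_clamp_sub_clamp_le_pairDist (ht : 0 ≤ t) (hs : 0 ≤ s)
    (hγ : ContinuousOn γ (Icc 0 t)) (hη : ContinuousOn η (Icc 0 s)) (l : ℝ) :
    ‖clamp t γ l - clamp s η l‖ ≤ pairDist t γ s η := by
  have hcont : Continuous fun l => ‖clamp t γ l - clamp s η l‖ :=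
    ((continuous_clamp ht hγ).sub (continuous_clamp hs hη)).norm
  have hl : min (max l 0) (max t s) ∈ Icc 0 (max t s) :=
    ⟨le_min (le_max_right _ _) (le_max_of_le_left ht), min_le_right _ _⟩
  have key := le_csSup (isCompact_Icc.image hcont).bddAbove (mem_image_of_mem _ hl)
  rw [← pairDist_eq_sSup_clamp] at key
  simpa only [clamp, max_eq_left (le_min (le_max_right l 0) (le_max_of_le_left ht)), min_assoc,
    min_eq_right (le_max_left t s), min_eq_right (le_max_right t s)] using key

theorem pairDist_triangle (ht : 0 ≤ t) (hs : 0 ≤ s) (hr : 0 ≤ r)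
    (hγ : ContinuousOn γ (Icc 0 t)) (hη : ContinuousOn η (Icc 0 s))
    (hζ : ContinuousOn ζ (Icc 0 r)) :
    pairDist t γ s η ≤ pairDist t γ r ζ + pairDist r ζ s η := by
  refine pairDist_le ht fun l hl => ?_
  have hclamp : ∀ (u : ℝ) (ξ : ℝ → E d), ξ (min l u) = clamp u ξ l := fun u ξ => by
    simp [clamp, max_eq_left hl.1]
  rw [hclamp t γ, hclamp s η]
  calc ‖clamp t γ l - clamp s η l‖
      ≤ ‖clamp t γ l - clamp r ζ l‖ + ‖clamp r ζ l - clamp s η l‖ :=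
        norm_sub_le_norm_sub_add_norm_sub _ _ _
    _ ≤ pairDist t γ r ζ + pairDist r ζ s η :=
        add_le_add (norm_clamp_sub_clamp_le_pairDist ht hr hγ hζ l)
          (norm_clamp_sub_clamp_le_pairDist hr hs hζ hη l)

theorem dInfty_triangle (ht : 0 ≤ t) (hs : 0 ≤ s) (hr : 0 ≤ r)
    (hγ : ContinuousOn γ (Icc 0 t)) (hη : ContinuousOn η (Icc 0 s))
    (hζ : ContinuousOn ζ (Icc 0 r)) :
    dInfty t γ s η ≤ dInfty t γ r ζ + dInfty r ζ s η := by
  have := pairDist_triangle ht hs hr hγ hη hζ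
  have := abs_sub_le t r s
  simp only [dInfty]
  linarith

theorem eq_of_dInfty_eq_zero (ht : 0 ≤ t) (hγ : ContinuousOn γ (Icc 0 t))
    (hη : ContinuousOn η (Icc 0 s)) (h : dInfty t γ s η = 0) :
    s = t ∧ ∀ l ∈ Icc 0 s, η l = γ l := by
  have habs : |t - s| = 0 := le_antisymm (h ▸ abs_sub_le_dInfty) (abs_nonneg _)
  obtain rfl : s = t := (sub_eq_zero.1 (abs_eq_zero.1 habs)).symm
  refine ⟨rfl, fun l hl => ?_⟩
  have hpair : pairDist s γ s η = 0 := by rwa [dInfty, habs, zero_add] at h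
  have := norm_clamp_sub_clamp_le_pairDist ht ht hγ hη l
  rw [hpair, norm_le_zero_iff, sub_eq_zero] at this
  simpa [clamp, max_eq_left hl.1, min_eq_left hl.2] using this.symm

/-- The limit path is the uniform limit of the horizontally extended paths `clamp (ts j) (gs j)`. -/
theorem exists_tendsto_dInfty_of_cauchy {ts : ℕ → ℝ} {gs : ℕ → ℝ → E d}
    (hts : ∀ k, 0 ≤ ts k) (hgs : ∀ k, ContinuousOn (gs k) (Icc 0 (ts k))) (hmono : Monotone ts)
    (hbdd : BddAbove (range ts))
    (hcau : ∀ e > 0, ∃ N, ∀ m ≥ N, ∀ n ≥ N, dInfty (ts m) (gs m) (ts n) (gs n) < e) :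
    ∃ γ : ℝ → E d, Continuous γ ∧
      Tendsto (fun j => dInfty (ts j) (gs j) (⨆ k, ts k) γ) atTop (𝓝 0) := by
  set c : ℕ → ℝ → E d := fun j => clamp (ts j) (gs j)
  have hunif : UniformCauchySeqOn c atTop univ := by
    refine Metric.uniformCauchySeqOn_iff.2 fun e he => (hcau e he).imp fun N hN m hm n hn l _ => ?_
    rw [dist_eq_norm]
    exact (norm_clamp_sub_clamp_le_pairDist (hts m) (hts n) (hgs m) (hgs n) l).trans_lt
      (le_add_of_nonneg_left (abs_nonneg _) |>.trans_lt (hN m hm n hn))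
  choose γ hγ using fun l => cauchySeq_tendsto_of_complete (hunif.cauchySeq (mem_univ l))
  have hconv : TendstoUniformly c γ atTop :=
    tendstoUniformlyOn_univ.1 (hunif.tendstoUniformlyOn_of_tendsto fun l _ => hγ l)
  refine ⟨γ, hconv.continuous (Frequently.of_forall fun j => continuous_clamp (hts j) (hgs j)), ?_⟩
  set t' := ⨆ k, ts k
  have htime : Tendsto (fun j => |ts j - t'|) atTop (𝓝 0) := by
    have := ((tendsto_atTop_ciSup hmono hbdd).sub_const t').abs
    rwa [sub_self, abs_zero] at this
  have hpath : Tendsto (fun j => pairDist (ts j) (gs j) t' γ) atTop (𝓝 0) := by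
    refine tendsto_order.2 ⟨fun a ha => Eventually.of_forall fun j => ha.trans_le pairDist_nonneg,
      fun a ha => ?_⟩
    filter_upwards [Metric.tendstoUniformly_iff.1 hconv (a / 2) (half_pos ha)] with j hj
    refine (pairDist_le (hts j) fun l hl => ?_).trans_lt (half_lt_self ha)
    rw [max_eq_right (le_ciSup hbdd j)] at hl
    have := hj l
    rw [dist_comm, dist_eq_norm] at this
    rw [min_eq_left hl.2]
    simpa [c, clamp, max_eq_left hl.1] using this.le
  simpa [dInfty] using htime.add hpath

end PathDistance

def pathSpace (T t₀ : ℝ) : Set (ℝ × (ℝ → E d)) := {x | Mem T t₀ x.1 x.2}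

section PathFunctionals

variable {T t₀ : ℝ} {p : ℕ → ℝ × (ℝ → E d)}

theorem IsGaugeType.apply_self {ρ : ℝ → (ℝ → E d) → ℝ → (ℝ → E d) → ℝ}
    (hρ : IsGaugeType T t₀ ρ) : ∀ x ∈ pathSpace T t₀, ρ x.1 x.2 x.1 x.2 = 0 :=
  fun _ hx => hρ.2.2.1 _ _ hx

theorem IsGaugeType.apply_nonneg {ρ : ℝ → (ℝ → E d) → ℝ → (ℝ → E d) → ℝ}
    (hρ : IsGaugeType T t₀ ρ) : ∀ x ∈ pathSpace T t₀, ∀ y ∈ pathSpace T t₀, 0 ≤ ρ x.1 x.2 y.1 y.2 :=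
  fun _ hx _ hy => hρ.1 _ _ _ _ hx hy

theorem IsGaugeType.eventually_dInfty_lt {ρ : ℝ → (ℝ → E d) → ℝ → (ℝ → E d) → ℝ}
    (hρ : IsGaugeType T t₀ ρ) {c : ℕ → ℝ} (hc : Tendsto c atTop (𝓝 0)) {e : ℝ} (he : 0 < e) :
    ∀ᶠ k in atTop, ∀ s γ l η, Mem T t₀ s γ → Mem T t₀ l η → ρ s γ l η ≤ c k →
      dInfty s γ l η < e := by
  obtain ⟨-, -, -, hgauge⟩ := hρ
  obtain ⟨δ, hδ, hδe⟩ := hgauge e he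
  filter_upwards [hc.eventually (eventually_le_nhds hδ)] with k hk s γ l η hγ hη hρk
  exact hδe s γ l η hγ hη (hρk.trans hk)

theorem IsGaugeType.tendsto_apply {ρ : ℝ → (ℝ → E d) → ℝ → (ℝ → E d) → ℝ}
    (hρ : IsGaugeType T t₀ ρ) {s l : ℝ} {γ η : ℝ → E d} (hγ : Mem T t₀ s γ) (hη : Mem T t₀ l η)
    (hp : ∀ j, p j ∈ pathSpace T t₀)
    (hlim : Tendsto (fun j => dInfty l η (p j).1 (p j).2) atTop (𝓝 0)) :
    Tendsto (fun j => ρ s γ (p j).1 (p j).2) atTop (𝓝 (ρ s γ l η)) := by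
  obtain ⟨-, hcont, -, -⟩ := hρ
  refine Metric.tendsto_atTop.2 fun e he => ?_
  obtain ⟨δ, hδ, hδe⟩ := hcont s γ l η hγ hη e he
  refine (Metric.tendsto_atTop.1 hlim δ hδ).imp fun N hN j hj => ?_
  have hj := hN j hj
  rw [Real.dist_eq, sub_zero, abs_of_nonneg dInfty_nonneg] at hj
  exact hδe s γ _ _ hγ (hp j) (by rwa [dInfty_self, zero_add])

theorem PathUSC.eventually_lt {f : ℝ → (ℝ → E d) → ℝ} (hf : PathUSC T t₀ f) {s : ℝ}
    {γ : ℝ → E d} (hγ : Mem T t₀ s γ) (hp : ∀ j, p j ∈ pathSpace T t₀)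
    (hlim : Tendsto (fun j => dInfty s γ (p j).1 (p j).2) atTop (𝓝 0)) {c : ℝ} (hc : f s γ < c) :
    ∀ᶠ j in atTop, f (p j).1 (p j).2 < c := by
  obtain ⟨δ, hδ, hδc⟩ := hf s γ hγ c hc
  filter_upwards [hlim.eventually (eventually_lt_nhds hδ)] with j hj
  exact hδc _ _ (hp j) hj

theorem IsGaugeType.exists_tendsto_of_le {ρ : ℝ → (ℝ → E d) → ℝ → (ℝ → E d) → ℝ}
    (hρ : IsGaugeType T t₀ ρ) (ht₀ : 0 ≤ t₀) (hp : ∀ k, p k ∈ pathSpace T t₀)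
    (hmono : Monotone fun k => (p k).1) {c : ℕ → ℝ} (hc : Tendsto c atTop (𝓝 0))
    (hle : ∀ k j, k ≤ j → ρ (p k).1 (p k).2 (p j).1 (p j).2 ≤ c k) :
    ∃ x ∈ pathSpace T t₀, (∀ k, (p k).1 ≤ x.1) ∧ Tendsto (fun k => (p k).1) atTop (𝓝 x.1) ∧
      Tendsto (fun j => dInfty x.1 x.2 (p j).1 (p j).2) atTop (𝓝 0) := by
  have hbdd : BddAbove (range fun k => (p k).1) := ⟨T, by rintro _ ⟨k, rfl⟩; exact (hp k).2.1⟩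
  have hcau : ∀ e > 0, ∃ N, ∀ m ≥ N, ∀ n ≥ N, dInfty (p m).1 (p m).2 (p n).1 (p n).2 < e := by
    intro e he
    obtain ⟨N, hN⟩ := eventually_atTop.1 (hρ.eventually_dInfty_lt hc he)
    refine ⟨N, fun m hm n hn => ?_⟩
    rcases le_total m n with hmn | hnm
    · exact hN m hm _ _ _ _ (hp m) (hp n) (hle m n hmn)
    · rw [dInfty_comm]
      exact hN n hn _ _ _ _ (hp n) (hp m) (hle n m hnm)
  obtain ⟨γ, hγ, hlim⟩ := exists_tendsto_dInfty_of_cauchy (fun k => ht₀.trans (hp k).1)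
    (fun k => (hp k).2.2) hmono hbdd hcau
  refine ⟨(⨆ k, (p k).1, γ), ⟨(hp 0).1.trans (le_ciSup hbdd 0), ciSup_le fun k => (hp k).2.1,
    hγ.continuousOn⟩, le_ciSup hbdd, tendsto_atTop_ciSup hmono hbdd, ?_⟩
  simpa only [dInfty_comm] using hlim

theorem le_penalized_of_tendsto {f : ℝ → (ℝ → E d) → ℝ}
    {ρ : ℝ → (ℝ → E d) → ℝ → (ℝ → E d) → ℝ} (hf : PathUSC T t₀ f) (hρ : IsGaugeType T t₀ ρ)
    {δ : ℕ → ℝ} {q : ℕ → ℝ × (ℝ → E d)} (hq : ∀ i, q i ∈ pathSpace T t₀) {x : ℝ × (ℝ → E d)}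
    (hx : x ∈ pathSpace T t₀) (hp : ∀ j, p j ∈ pathSpace T t₀)
    (hlim : Tendsto (fun j => dInfty x.1 x.2 (p j).1 (p j).2) atTop (𝓝 0)) {k : ℕ} {a : ℝ}
    (ha : ∀ᶠ j in atTop,
      a ≤ penalized (Function.uncurry f) (fun x y => ρ x.1 x.2 y.1 y.2) δ q k (p j)) :
    a ≤ penalized (Function.uncurry f) (fun x y => ρ x.1 x.2 y.1 y.2) δ q k x := by
  set P : ℝ × (ℝ → E d) → ℝ := fun y => ∑ i ∈ Finset.range (k + 1), δ i * ρ (q i).1 (q i).2 y.1 y.2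
  have hP : Tendsto (fun j => P (p j)) atTop (𝓝 (P x)) :=
    tendsto_finsetSum _ fun i _ => (hρ.tendsto_apply (hq i) hx hp hlim).const_mul (δ i)
  change ∀ᶠ j in atTop, a ≤ f (p j).1 (p j).2 - P (p j) at ha
  change a ≤ f x.1 x.2 - P x
  by_contra! hlt
  set θ := a - (f x.1 x.2 - P x)
  have hf' := hf.eventually_lt hx hp hlim (c := f x.1 x.2 + θ / 2) (by linarith)
  have hP' := hP.eventually (eventually_gt_nhds (show P x - θ / 2 < P x by linarith))
  obtain ⟨j, hja, hjf, hjP⟩ := (ha.and (hf'.and hP')).exists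
  linarith

theorem IsGaugeType.eq_of_tendsto_of_le {ρ : ℝ → (ℝ → E d) → ℝ → (ℝ → E d) → ℝ}
    (hρ : IsGaugeType T t₀ ρ) (ht₀ : 0 ≤ t₀) {x y : ℝ × (ℝ → E d)} (hx : x ∈ pathSpace T t₀)
    (hy : y ∈ pathSpace T t₀) (hp : ∀ j, p j ∈ pathSpace T t₀)
    (hlim : Tendsto (fun j => dInfty x.1 x.2 (p j).1 (p j).2) atTop (𝓝 0)) {c : ℕ → ℝ}
    (hc : Tendsto c atTop (𝓝 0)) (hle : ∀ k, ρ (p k).1 (p k).2 y.1 y.2 ≤ c k) :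
    y.1 = x.1 ∧ ∀ l ∈ Icc 0 y.1, y.2 l = x.2 l := by
  have hpy : Tendsto (fun k => dInfty (p k).1 (p k).2 y.1 y.2) atTop (𝓝 0) := by
    refine tendsto_order.2 ⟨fun a ha => Eventually.of_forall fun k => ha.trans_le dInfty_nonneg,
      fun a ha => ?_⟩
    filter_upwards [hρ.eventually_dInfty_lt hc ha] with k hk using hk _ _ _ _ (hp k) hy (hle k)
  have hzero : dInfty x.1 x.2 y.1 y.2 ≤ 0 := by
    refine le_of_tendsto_of_tendsto' tendsto_const_nhds (by simpa using hlim.add hpy) fun k => ?_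
    exact dInfty_triangle (ht₀.trans hx.1) (ht₀.trans hy.1) (ht₀.trans (hp k).1) hx.2.2 hy.2.2
      (hp k).2.2
  exact eq_of_dInfty_eq_zero (ht₀.trans hx.1) hx.2.2 hy.2.2 (hzero.antisymm dInfty_nonneg)

theorem IsBorweinPreissSeq.exists_limit {f : ℝ → (ℝ → E d) → ℝ}
    {ρ : ℝ → (ℝ → E d) → ℝ → (ℝ → E d) → ℝ} (hf : PathUSC T t₀ f) (hρ : IsGaugeType T t₀ ρ)
    (ht₀ : 0 ≤ t₀) {δ η c : ℕ → ℝ}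
    (hp : IsBorweinPreissSeq (pathSpace T t₀) Prod.fst (Function.uncurry f)
      (fun x y => ρ x.1 x.2 y.1 y.2) δ η p)
    (h₀ : p 0 ∈ pathSpace T t₀) (hδ : ∀ i, 0 ≤ δ i) (hc : Tendsto c atTop (𝓝 0))
    (hρc : ∀ k, ∀ y ∈ improvementSet (pathSpace T t₀) Prod.fst (Function.uncurry f)
      (fun x y => ρ x.1 x.2 y.1 y.2) δ p k, ρ (p k).1 (p k).2 y.1 y.2 ≤ c k) :
    ∃ x, (∀ k, x ∈ improvementSet (pathSpace T t₀) Prod.fst (Function.uncurry f)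
        (fun x y => ρ x.1 x.2 y.1 y.2) δ p k) ∧
      Tendsto (fun k => (p k).1) atTop (𝓝 x.1) ∧
      ∀ y ∈ pathSpace T t₀, (∀ k, y ∈ improvementSet (pathSpace T t₀) Prod.fst
        (Function.uncurry f) (fun x y => ρ x.1 x.2 y.1 y.2) δ p k) →
        y.1 = x.1 ∧ ∀ l ∈ Icc 0 y.1, y.2 l = x.2 l := by
  have hpM := hp.mem h₀
  have hpA : ∀ {k j}, k ≤ j → p j ∈ _ := hp.mem_improvementSet h₀ hρ.apply_self hρ.apply_nonneg hδ
  obtain ⟨x, hxM, hpx, htime, hlim⟩ := hρ.exists_tendsto_of_le ht₀ hpM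
    (monotone_nat_of_le_succ fun k => (hp.succ_mem k).2.1) hc fun k j hkj => hρc k _ (hpA hkj)
  refine ⟨x, fun k => ⟨hxM, hpx k, ?_⟩, htime, fun y hy hyA =>
    hρ.eq_of_tendsto_of_le ht₀ hxM hy hpM hlim hc fun k => hρc k y (hyA k)⟩
  exact le_penalized_of_tendsto hf hρ hpM hxM hpM hlim
    (eventually_atTop.2 ⟨k, fun j hkj => (hpA hkj).2.2⟩)

end PathFunctionals

theorem borwein_preiss_variational_principle_general
    {d : ℕ} (T : ℝ) (t : ℝ) (ht0 : 0 ≤ t)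
    (f : ℝ → (ℝ → E d) → ℝ)
    (husc : PathUSC T t f)
    (hbdd : BddAbovePath T t f)
    (ρ : ℝ → (ℝ → E d) → ℝ → (ℝ → E d) → ℝ)
    (hρ : IsGaugeType T t ρ)
    (δ : ℕ → ℝ) (hδ : ∀ i, 0 < δ i)
    (ε : ℝ) (hε : 0 < ε)
    (t0 : ℝ) (γ0 : ℝ → E d) (h0 : Mem T t t0 γ0)
    (hnear : ∀ s γ, Mem T t s γ → f s γ - ε ≤ f t0 γ0) :
    ∃ (that : ℝ) (γhat : ℝ → E d) (ts : ℕ → ℝ) (gs : ℕ → ℝ → E d) (Shat : ℝ),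
      Mem T t that γhat ∧
      ts 0 = t0 ∧ gs 0 = γ0 ∧
      (∀ i, Mem T t (ts i) (gs i)) ∧
      -- (i)
      ρ t0 γ0 that γhat ≤ ε / δ 0 ∧
      (∀ i, ρ (ts i) (gs i) that γhat ≤ ε / (2 ^ i * δ 0)) ∧
      Monotone ts ∧ (∀ i, ts i ≤ that) ∧ Tendsto ts atTop (nhds that) ∧
      -- (ii): the series converges and `f(γ̂) - Σ δᵢ ρ(γⁱ, γ̂) ≥ f(γ⁰)`
      HasSum (fun i => δ i * ρ (ts i) (gs i) that γhat) Shat ∧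
      f t0 γ0 ≤ f that γhat - Shat ∧
      -- (iii)
      (∀ s η, Mem T that s η →
        ¬(s = that ∧ ∀ l ∈ Icc (0:ℝ) s, η l = γhat l) →
        ∀ S, HasSum (fun i => δ i * ρ (ts i) (gs i) s η) S →
          f s η - S < f that γhat - Shat) := by
  set M : Set (ℝ × (ℝ → E d)) := pathSpace T t
  set R : ℝ × (ℝ → E d) → ℝ × (ℝ → E d) → ℝ := fun x y => ρ x.1 x.2 y.1 y.2
  set c : ℕ → ℝ := fun k => ε / (2 ^ k * δ 0)
  -- `εs 0 = ε` matches `hnear`, `εs k ≤ δ k * c k` gives (i), and `εs k ≤ ε / 2 ^ k` makes the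
  -- series in (ii) converge.
  set εs : ℕ → ℝ := fun k => min (δ k * c k) (ε / 2 ^ k)
  have hR₀ : ∀ x ∈ M, R x x = 0 := hρ.apply_self
  have hR : ∀ x ∈ M, ∀ y ∈ M, 0 ≤ R x y := hρ.apply_nonneg
  have hδ' : ∀ i, 0 ≤ δ i := fun i => (hδ i).le
  have hFbdd : BddAbove (Function.uncurry f '' M) := by
    obtain ⟨B, hB⟩ := hbdd
    exact ⟨B, by rintro _ ⟨x, hx, rfl⟩; exact hB _ _ hx⟩
  obtain ⟨p, hp0, hp⟩ := exists_isBorweinPreissSeq M Prod.fst (Function.uncurry f) R δ εs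
    (x₀ := (t0, γ0)) h0 hFbdd hR hδ' fun k =>
    lt_min (mul_pos (hδ k) (div_pos hε (mul_pos (by positivity) (hδ 0)))) (by positivity)
  have h₀ : p 0 ∈ M := hp0 ▸ h0
  have hεs₀ : εs 0 = ε := by simp [εs, c, mul_div_cancel₀ _ (hδ 0).ne']
  have hweight := hp.mul_le_of_mem_improvementSet h₀ hR₀ hR hδ' fun x hx =>
    show f x.1 x.2 ≤ f (p 0).1 (p 0).2 + εs 0 by rw [hεs₀, hp0]; linarith [hnear x.1 x.2 hx]
  have hρc : ∀ k, ∀ x ∈ improvementSet M Prod.fst (Function.uncurry f) R δ p k, R (p k) x ≤ c k :=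
    fun k x hx => le_of_mul_le_mul_left ((hweight k x hx).trans (min_le_left _ _)) (hδ k)
  have hc : Tendsto c atTop (𝓝 0) := tendsto_const_nhds.div_atTop
    ((tendsto_pow_atTop_atTop_of_one_lt one_lt_two).atTop_mul_const (hδ 0))
  obtain ⟨x, hxA, htime, huniq⟩ := hp.exists_limit husc hρ ht0 h₀ hδ' hc hρc
  have hsum : HasSum (fun i => δ i * R (p i) x) (∑' i, δ i * R (p i) x) := by
    refine (Summable.of_nonneg_of_le (fun i => mul_nonneg (hδ' i) (hR _ (hp.mem h₀ i) _ (hxA 0).1))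
      (fun i => (hweight i x (hxA i)).trans (min_le_right _ _)) ?_).hasSum
    simpa [div_eq_mul_inv, inv_pow] using summable_geometric_two.mul_left ε
  refine ⟨x.1, x.2, fun k => (p k).1, fun k => (p k).2, _, (hxA 0).1, congrArg Prod.fst hp0,
    congrArg Prod.snd hp0, hp.mem h₀, by simpa [hp0, c] using hρc 0 x (hxA 0),
    fun i => hρc i x (hxA i), monotone_nat_of_le_succ fun k => (hp.succ_mem k).2.1,
    fun k => (hxA k).2.1, htime, hsum, ?_, ?_⟩
  · have h := hp.penalized_self_le_of_hasSum hR₀ hxA hsum 0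
    rw [penalized, zero_add, Finset.sum_range_one, hR₀ _ h₀, mul_zero, sub_zero, hp0] at h
    exact h
  · intro s η hsη hne S hS
    have hyM : (s, η) ∈ M := ⟨(hxA 0).1.1.trans hsη.1, hsη.2⟩
    obtain ⟨k, hk⟩ : ∃ k, (s, η) ∉ improvementSet M Prod.fst (Function.uncurry f) R δ p k := by
      by_contra! hall
      exact hne (huniq _ hyM hall)
    exact hp.sub_lt_of_notMem_improvementSet h₀ hR₀ hR hδ' hxA hsum hyM hsη.1 hk hS

/-- modified Borwein–Preiss variational principle on `Λ^t`. -/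
theorem borwein_preiss_variational_principle
    {d : ℕ} (T : ℝ) (hT : 0 < T) (t : ℝ) (ht0 : 0 ≤ t) (htT : t ≤ T)
    (f : ℝ → (ℝ → E d) → ℝ)
    (husc : PathUSC T t f)
    (hbdd : BddAbovePath T t f)
    (ρ : ℝ → (ℝ → E d) → ℝ → (ℝ → E d) → ℝ)
    (hρ : IsGaugeType T t ρ)
    (δ : ℕ → ℝ) (hδ : ∀ i, 0 < δ i)
    (ε : ℝ) (hε : 0 < ε)
    (t0 : ℝ) (γ0 : ℝ → E d) (h0 : Mem T t t0 γ0)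
    (hnear : ∀ s γ, Mem T t s γ → f s γ - ε ≤ f t0 γ0) :
    ∃ (that : ℝ) (γhat : ℝ → E d) (ts : ℕ → ℝ) (gs : ℕ → ℝ → E d) (Shat : ℝ),
      Mem T t that γhat ∧
      ts 0 = t0 ∧ gs 0 = γ0 ∧
      (∀ i, Mem T t (ts i) (gs i)) ∧
      -- (i)
      ρ t0 γ0 that γhat ≤ ε / δ 0 ∧
      (∀ i, ρ (ts i) (gs i) that γhat ≤ ε / (2 ^ i * δ 0)) ∧
      Monotone ts ∧ (∀ i, ts i ≤ that) ∧ Tendsto ts atTop (nhds that) ∧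
      -- (ii): the series converges and `f(γ̂) - Σ δᵢ ρ(γⁱ, γ̂) ≥ f(γ⁰)`
      HasSum (fun i => δ i * ρ (ts i) (gs i) that γhat) Shat ∧
      f t0 γ0 ≤ f that γhat - Shat ∧
      -- (iii)
      (∀ s η, Mem T that s η →
        ¬(s = that ∧ ∀ l ∈ Icc (0:ℝ) s, η l = γhat l) →
        ∀ S, HasSum (fun i => δ i * ρ (ts i) (gs i) s η) S →
          f s η - S < f that γhat - Shat) :=
  borwein_preiss_variational_principle_general T t ht0 f husc hbdd ρ hρ δ hδ ε hε t0 γ0 h0 hnear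
end PHJB
end
end

section
/- For every m ∈ ℕ+, every real M ≥ 3, and every (t, γ_t) ∈ [0,T]×Λ̂: ‖γ_t‖_0^{2m} ≤ Υ^{m,M}(γ_t) ≤ M‖γ_t‖_0^{2m}. -/
set_option linter.unusedVariables false

noncomputable section

open Set Filter Topology

namespace PHJB

variable {d n : ℕ}

/-! Writing `A = ‖γ_t‖₀^{2m}` and `B = |γ_t(t)|^{2m}`, we have
`Υ^{m,M}(γ_t) = (A - B)³/A² + M B` with `0 ≤ B ≤ A`, so both bounds reduce to the elementary
inequalities `A - 3B ≤ (A - B)³/A² ≤ A - B`. The one analytic input is `|γ_t(t)| ≤ ‖γ_t‖₀`,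
which needs a càdlàg path to be bounded on `[0,t]` (otherwise the `sSup` defining `‖γ_t‖₀`
is junk). -/

theorem _root_.IsCompact.bddAbove_image_of_isBoundedUnder {X α : Type*} [TopologicalSpace X]
    [SemilatticeSup α] [Nonempty α] {s : Set X} {f : X → α} (hs : IsCompact s)
    (hf : ∀ x ∈ s, (𝓝[s] x).IsBoundedUnder (· ≤ ·) f) : BddAbove (f '' s) :=
  hs.induction_on (by simp) (fun _ _ hst ht => ht.mono (image_mono hst))
    (fun _ _ hs ht => by rw [image_union]; exact hs.union ht)
    fun x hx => by
      obtain ⟨b, hb⟩ := hf x hx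
      exact ⟨{y | f y ≤ b}, hb, b, forall_mem_image.2 fun _ hy => hy⟩

section Cadlag

variable {t : ℝ} {γ : ℝ → E d}

theorem IsCadlagOn.isBoundedUnder_norm (hγ : IsCadlagOn t γ) {x : ℝ} (hx : x ∈ Icc 0 t) :
    (𝓝[Icc 0 t] x).IsBoundedUnder (· ≤ ·) (‖γ ·‖) := by
  have hleft : (𝓝[Icc 0 t ∩ Iio x] x).IsBoundedUnder (· ≤ ·) (‖γ ·‖) := by
    rcases hx.1.eq_or_lt with rfl | hx0
    · have : Icc 0 t ∩ Iio 0 = ∅ := by ext; simp +contextual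
      rw [this, nhdsWithin_empty]
      exact ⟨0, eventually_bot⟩
    · obtain ⟨L, hL⟩ := hγ.2 x ⟨hx0, hx.2⟩
      exact hL.norm.isBoundedUnder_le.mono (nhdsWithin_mono _ inter_subset_right)
  have hright : (𝓝[Icc 0 t ∩ Ici x] x).IsBoundedUnder (· ≤ ·) (‖γ ·‖) := by
    rcases hx.2.lt_or_eq with hxt | rfl
    · exact (Tendsto.isBoundedUnder_le (hγ.1 x ⟨hx.1, hxt⟩).norm).mono
        (nhdsWithin_mono _ inter_subset_right)
    · refine (tendsto_pure_nhds (‖γ ·‖) x).isBoundedUnder_le.mono ?_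
      rw [← nhdsWithin_singleton]
      exact nhdsWithin_mono _ fun l hl => le_antisymm hl.1.2 hl.2
  rw [← inter_univ (Icc 0 t), ← Iio_union_Ici (a := x), inter_union_distrib_left,
    nhdsWithin_union, IsBoundedUnder, map_sup]
  exact isBounded_sup hleft hright

theorem IsCadlagOn.bddAbove_norm_image (hγ : IsCadlagOn t γ) :
    BddAbove ((‖γ ·‖) '' Icc 0 t) :=
  isCompact_Icc.bddAbove_image_of_isBoundedUnder fun _ hx => hγ.isBoundedUnder_norm hx

theorem IsCadlagOn.norm_le_supNorm (hγ : IsCadlagOn t γ) {s : ℝ} (hs : s ∈ Icc 0 t) :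
    ‖γ s‖ ≤ supNorm t γ :=
  le_csSup hγ.bddAbove_norm_image (mem_image_of_mem _ hs)

end Cadlag

theorem pairDist_zero_right (t : ℝ) (γ : ℝ → E d) :
    pairDist t γ t (fun _ => 0) = supNorm t γ := by
  rw [pairDist, supNorm, max_self]
  exact congrArg sSup (image_congr fun l hl => by rw [min_eq_left hl.2, sub_zero])

theorem Sm_eq_of_norm_le (m : ℕ) {t s : ℝ} {γ η : ℝ → E d}
    (h : ‖γ t - η s‖ ≤ pairDist t γ s η) :
    Sm m t γ s η = (pairDist t γ s η ^ (2*m) - ‖γ t - η s‖ ^ (2*m)) ^ 3 /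
      (pairDist t γ s η ^ (2*m)) ^ 2 := by
  rw [Sm, ← pow_mul, show 2 * m * 2 = 4 * m by ring]
  split_ifs with h0
  · rw [h0, le_antisymm (h0 ▸ h) (norm_nonneg _), sub_self, zero_pow three_ne_zero, zero_div]
  · norm_num

theorem sub_three_mul_le_cube_div_sq {A B : ℝ} (hB : 0 ≤ B) (hBA : B ≤ 3 * A) :
    A - 3 * B ≤ (A - B) ^ 3 / A ^ 2 := by
  rcases (show 0 ≤ A by linarith).eq_or_lt with rfl | hA
  · obtain rfl : B = 0 := by linarith
    simp
  · rw [le_div_iff₀ (by positivity)]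
    -- `(A - B)³ - (A - 3B)A² = B²(3A - B)`
    nlinarith [mul_nonneg (sq_nonneg B) (sub_nonneg.2 hBA)]

theorem cube_div_sq_le_sub {A B : ℝ} (hB : 0 ≤ B) (hBA : B ≤ A) :
    (A - B) ^ 3 / A ^ 2 ≤ A - B := by
  rcases (hB.trans hBA).eq_or_lt with rfl | hA
  · obtain rfl : B = 0 := le_antisymm hBA hB
    simp
  · have hsq : (A - B) ^ 2 ≤ A ^ 2 := pow_le_pow_left₀ (sub_nonneg.2 hBA) (by linarith) 2
    rw [div_le_iff₀ (by positivity), pow_succ', mul_comm _ (A ^ 2), mul_comm (A - B)]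
    exact mul_le_mul_of_nonneg_right hsq (sub_nonneg.2 hBA)

theorem ups_equivalent_to_supNorm_pow_general
    {d : ℕ} (T : ℝ) (m : ℕ) (M : ℝ) (hM : 3 ≤ M)
    (t : ℝ) (γ : ℝ → E d) (h : MemHat T 0 t γ) :
    supNorm t γ ^ (2*m) ≤ Ups0 m M t γ ∧ Ups0 m M t γ ≤ M * supNorm t γ ^ (2*m) := by
  obtain ⟨ht0, -, hγ⟩ := h
  have hnorm : ‖γ t‖ ≤ supNorm t γ := hγ.norm_le_supNorm ⟨ht0, le_rfl⟩
  set A := supNorm t γ ^ (2*m)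
  set B := ‖γ t‖ ^ (2*m)
  have hB : 0 ≤ B := by positivity
  have hBA : B ≤ A := pow_le_pow_left₀ (norm_nonneg _) hnorm _
  have hUps : Ups0 m M t γ = (A - B) ^ 3 / A ^ 2 + M * B := by
    rw [Ups0, Ups, Sm_eq_of_norm_le m (by simpa [pairDist_zero_right] using hnorm)]
    simp [pairDist_zero_right, A, B]
  rw [hUps]
  constructor
  · linarith [sub_three_mul_le_cube_div_sq hB (by linarith : B ≤ 3 * A),
      mul_le_mul_of_nonneg_right hM hB]
  · linarith [cube_div_sq_le_sub hB hBA,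
      mul_nonneg (by linarith : 0 ≤ M - 1) (sub_nonneg.2 hBA)]

/-- `‖γ_t‖₀^{2m} ≤ Υ^{m,M}(γ_t) ≤ M ‖γ_t‖₀^{2m}` for `M ≥ 3`. -/
theorem ups_equivalent_to_supNorm_pow
    {d : ℕ} (T : ℝ) (hT : 0 < T) (m : ℕ) (hm : 0 < m) (M : ℝ) (hM : 3 ≤ M)
    (t : ℝ) (γ : ℝ → E d) (h : MemHat T 0 t γ) :
    supNorm t γ ^ (2*m) ≤ Ups0 m M t γ ∧ Ups0 m M t γ ≤ M * supNorm t γ ^ (2*m) :=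
  ups_equivalent_to_supNorm_pow_general T m M hM t γ h
end PHJB
end
end

section
/- Fix m ∈ ℕ+ and (t̂, a_{t̂}) ∈ [0,T)×Λ̂_{t̂}, and set S_m^{a_{t̂}}(γ_t) := S_m(γ_t, a_{t̂}) for (t, γ_t) ∈ [t̂,T]×Λ̂^{t̂}. Then for every (t, γ_t) ∈ [t̂,T]×Λ̂^{t̂} and every i ∈ {1,…,d}, the limit ∂_{x_i}S_m^{a_{t̂}}(γ_t) = lim_{h→0}(S_m^{a_{t̂}}(γ_t^{h e_i}) − S_m^{a_{t̂}}(γ_t))/h exists and equals −6m(‖γ_t−a_{t̂}‖_0^{2m} − |γ_t(t)−a_{t̂}(t̂)|^{2m})² |γ_t(t)−a_{t̂}(t̂)|^{2m−2} ((γ_t)_i(t)−(a_{t̂})_i(t̂)) / ‖γ_t−a_{t̂}‖_0^{4m} when ‖γ_t−a_{t̂}‖_0 ≠ 0, and equals 0 when ‖γ_t−a_{t̂}‖_0 = 0 (here (γ_t)_i(t) = ⟨γ_t(t), e_i⟩, and powers |x|^0 are interpreted as 1). -/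
set_option linter.unusedVariables false

noncomputable section

open Set Filter Topology

namespace PHJB

variable {d n : ℕ}

/-! Write `x = γ_t(t) - a(t̂)`. A vertical bump at time `t` leaves the gaps
`|γ_t(l) - a(l ∧ t̂)|`, `l ∈ [0,t)`, untouched; if `A` is their supremum, then
`‖γ_t^{h eᵢ} - a‖₀ = max (|x + h eᵢ|, A)`. Whenever `|x + h eᵢ| > A` the numerator of `S_m`
vanishes, so along the bump `S_m = ((A^{2m} - |x + h eᵢ|^{2m})⁺)³ / A^{4m}` (also for `A = 0`,
where Lean's division by zero gives `0`). This is the `C¹` map `y ↦ (y⁺)³` composed with a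
polynomial in `h`, and the chain rule gives the formula. -/

theorem sSup_insert_of_nonneg {S : Set ℝ} (hS : BddAbove S) {b : ℝ} (hb : 0 ≤ b) :
    sSup (insert b S) = max b (sSup S) := by
  rcases S.eq_empty_or_nonempty with rfl | hne
  · rw [insert_empty_eq, csSup_singleton, Real.sSup_empty, max_eq_left hb]
  · exact csSup_insert hS hne

theorem hasDerivAt_max_zero_pow {k : ℕ} (hk : 1 < k) (c : ℝ) :
    HasDerivAt (fun y : ℝ => max y 0 ^ k) (k * max c 0 ^ (k - 1)) c := by
  rcases lt_trichotomy c 0 with hc | rfl | hc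
  · have hzero : (fun y : ℝ => max y 0 ^ k) =ᶠ[𝓝 c] fun _ => 0 := by
      filter_upwards [Iio_mem_nhds hc] with y hy
      rw [max_eq_right (le_of_lt hy), zero_pow (by omega)]
    rw [max_eq_right hc.le, zero_pow (by omega), mul_zero]
    exact (hasDerivAt_const c 0).congr_of_eventuallyEq hzero
  · rw [max_self, zero_pow (by omega), mul_zero, hasDerivAt_iff_isLittleO_nhds_zero]
    simp only [zero_add, max_self, zero_pow (by omega : k ≠ 0), sub_zero, smul_zero]
    refine Asymptotics.IsBigO.trans_isLittleO ?_ (Asymptotics.isLittleO_pow_id hk)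
    refine Asymptotics.IsBigO.of_bound 1 (Eventually.of_forall fun y => ?_)
    rw [one_mul, norm_pow, norm_pow]
    exact pow_le_pow_left₀ (norm_nonneg _) (by simp [abs_le, le_abs_self]) k
  · have hpow : (fun y : ℝ => max y 0 ^ k) =ᶠ[𝓝 c] fun y => y ^ k := by
      filter_upwards [Ioi_mem_nhds hc] with y hy
      rw [max_eq_left (le_of_lt hy)]
    rw [max_eq_left hc.le]
    exact (hasDerivAt_pow k c).congr_of_eventuallyEq hpow

def pastGaps (t : ℝ) (γ : ℝ → E d) (s : ℝ) (η : ℝ → E d) : Set ℝ :=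
  (fun l => ‖γ l - η (min l s)‖) '' Ico 0 t

theorem vbump_zero (t : ℝ) (γ : ℝ → E d) : vbump t γ 0 = γ := by
  funext l
  by_cases hl : l = t <;> simp [vbump, hl]

theorem vbump_self (t : ℝ) (γ : ℝ → E d) (v : E d) : vbump t γ v t = γ t + v := by
  simp [vbump]

section bumpedDistance

variable {t s : ℝ} {γ η : ℝ → E d}

theorem pairDist_vbump (ht : 0 ≤ t) (hst : s ≤ t) (v : E d) :
    pairDist t (vbump t γ v) s η = sSup (insert ‖γ t - η s + v‖ (pastGaps t γ s η)) := by
  rw [pairDist, max_eq_left hst, ← Ico_insert_right ht, image_insert_eq, pastGaps,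
    min_self, min_eq_right hst, vbump_self, add_sub_right_comm]
  congr 2
  refine image_congr fun l hl => ?_
  rw [min_eq_left hl.2.le, vbump, if_neg hl.2.ne]

theorem pairDist_vbump_of_bddAbove (ht : 0 ≤ t) (hst : s ≤ t) (hb : BddAbove (pastGaps t γ s η))
    (v : E d) :
    pairDist t (vbump t γ v) s η = max ‖γ t - η s + v‖ (sSup (pastGaps t γ s η)) := by
  rw [pairDist_vbump ht hst, sSup_insert_of_nonneg hb (norm_nonneg _)]

theorem pairDist_vbump_of_not_bddAbove (ht : 0 ≤ t) (hst : s ≤ t)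
    (hb : ¬BddAbove (pastGaps t γ s η)) (v : E d) : pairDist t (vbump t γ v) s η = 0 := by
  rw [pairDist_vbump ht hst]
  exact Real.sSup_of_not_bddAbove fun h => hb (h.mono (subset_insert _ _))

end bumpedDistance

theorem max_pow_sub_pow_zero_pow_div {A r : ℝ} (hA : 0 ≤ A) (hr : 0 ≤ r) (k j l : ℕ) :
    max (A ^ k - r ^ k) 0 ^ (j + 1) / A ^ l
      = if max r A = 0 then 0 else (max r A ^ k - r ^ k) ^ (j + 1) / max r A ^ l := by
  rcases le_total r A with hrA | hAr
  · rw [max_eq_right hrA, max_eq_left (sub_nonneg.2 (pow_le_pow_left₀ hr hrA k))]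
    split_ifs with h0
    · subst h0
      obtain rfl := le_antisymm hrA hr
      simp
    · rfl
  · rw [max_eq_left hAr, max_eq_right (sub_nonpos.2 (pow_le_pow_left₀ hA hAr k)), sub_self]
    simp

theorem Sm_eq_of_pairDist_eq_max {m : ℕ} {t s A : ℝ} {γ η : ℝ → E d} (hA : 0 ≤ A)
    (hD : pairDist t γ s η = max ‖γ t - η s‖ A) :
    Sm m t γ s η = max (A ^ (2 * m) - ‖γ t - η s‖ ^ (2 * m)) 0 ^ 3 / A ^ (4 * m) := by
  rw [max_pow_sub_pow_zero_pow_div (j := 2) hA (norm_nonneg _), Sm, hD]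

theorem hasDerivAt_max_sub_norm_pow_cube_div {F : Type*} [NormedAddCommGroup F]
    [InnerProductSpace ℝ F] {A : ℝ} (hA : 0 ≤ A) (m : ℕ) (x v : F) :
    HasDerivAt (fun h : ℝ => max (A ^ (2 * m) - ‖x + h • v‖ ^ (2 * m)) 0 ^ 3 / A ^ (4 * m))
      (if max ‖x‖ A = 0 then 0 else
        -(6 * (m : ℝ)) * (max ‖x‖ A ^ (2 * m) - ‖x‖ ^ (2 * m)) ^ 2 * ‖x‖ ^ (2 * m - 2)
          * inner ℝ x v / max ‖x‖ A ^ (4 * m)) 0 := by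
  have hsq : HasDerivAt (fun h : ℝ => ‖x + h • v‖ ^ 2) (2 * inner ℝ x v) 0 := by
    simpa using (((hasDerivAt_id (0 : ℝ)).smul_const v).const_add x).norm_sq
  have hpow : HasDerivAt (fun h : ℝ => ‖x + h • v‖ ^ (2 * m))
      (m * ‖x‖ ^ (2 * m - 2) * (2 * inner ℝ x v)) 0 := by
    simpa [← pow_mul, Nat.mul_sub_one] using hsq.fun_pow m
  have hcube := (hasDerivAt_max_zero_pow (k := 3) (by norm_num) _).comp 0
    (hpow.const_sub (A ^ (2 * m)))
  refine (hcube.div_const (A ^ (4 * m))).congr_deriv ?_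
  have key := max_pow_sub_pow_zero_pow_div (j := 1) (l := 4 * m) hA (norm_nonneg x) (2 * m)
  rw [zero_smul, add_zero, Nat.cast_ofNat, show 3 - 1 = 1 + 1 from rfl]
  split_ifs at key ⊢ <;>
    linear_combination (-(6 * (m : ℝ)) * ‖x‖ ^ (2 * m - 2) * inner ℝ x v) * key

theorem Sm_first_vertical_derivative_general
    {d : ℕ} (T : ℝ) (m : ℕ)
    (that : ℝ) (h0 : 0 ≤ that)
    (a : ℝ → E d)
    (t : ℝ) (γ : ℝ → E d) (h : MemHat T that t γ) (i : Fin d) :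
    HasDerivAt (fun h' : ℝ => Sm m t (vbump t γ (h' • basis d i)) that a)
      (if pairDist t γ that a = 0 then 0 else
        -(6 * (m:ℝ)) * (pairDist t γ that a ^ (2*m) - ‖γ t - a that‖ ^ (2*m)) ^ 2
          * ‖γ t - a that‖ ^ (2*m - 2) * (γ t i - a that i)
          / pairDist t γ that a ^ (4*m)) 0 := by
  obtain ⟨hta, -, -⟩ := h
  have ht : 0 ≤ t := h0.trans hta
  by_cases hb : BddAbove (pastGaps t γ that a)
  · set A := sSup (pastGaps t γ that a)
    have hA : 0 ≤ A := Real.sSup_nonneg (by rintro _ ⟨l, -, rfl⟩; exact norm_nonneg _)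
    have hS (v : E d) : Sm m t (vbump t γ v) that a
        = max (A ^ (2 * m) - ‖γ t - a that + v‖ ^ (2 * m)) 0 ^ 3 / A ^ (4 * m) := by
      rw [Sm_eq_of_pairDist_eq_max hA, vbump_self, add_sub_right_comm]
      rw [pairDist_vbump_of_bddAbove ht hta hb, vbump_self, add_sub_right_comm]
    have hD : pairDist t γ that a = max ‖γ t - a that‖ A := by
      simpa [vbump_zero] using pairDist_vbump_of_bddAbove ht hta hb 0
    have hcoord : inner ℝ (γ t - a that) (basis d i) = γ t i - a that i := by
      simp [basis, EuclideanSpace.inner_single_right]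
    simp_rw [hS, hD, ← hcoord]
    exact hasDerivAt_max_sub_norm_pow_cube_div hA m (γ t - a that) (basis d i)
  · -- junk case: `sSup` of a set of reals that is not bounded above is `0`
    have hS (v : E d) : Sm m t (vbump t γ v) that a = 0 := by
      rw [Sm, pairDist_vbump_of_not_bddAbove ht hta hb, if_pos rfl]
    have hD : pairDist t γ that a = 0 := by
      simpa [vbump_zero] using pairDist_vbump_of_not_bddAbove ht hta hb 0
    simp_rw [hS, hD, if_pos]
    exact hasDerivAt_const 0 0

/-- explicit formula for the first vertical derivative of
`S_m^{a_{t̂}}`. -/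
theorem Sm_first_vertical_derivative
    {d : ℕ} (T : ℝ) (hT : 0 < T) (m : ℕ) (hm : 0 < m)
    (that : ℝ) (h0 : 0 ≤ that) (hthatT : that < T)
    (a : ℝ → E d) (ha : IsCadlagOn that a)
    (t : ℝ) (γ : ℝ → E d) (h : MemHat T that t γ) (i : Fin d) :
    HasDerivAt (fun h' : ℝ => Sm m t (vbump t γ (h' • basis d i)) that a)
      (if pairDist t γ that a = 0 then 0 else
        -(6 * (m:ℝ)) * (pairDist t γ that a ^ (2*m) - ‖γ t - a that‖ ^ (2*m)) ^ 2
          * ‖γ t - a that‖ ^ (2*m - 2) * (γ t i - a that i)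
          / pairDist t γ that a ^ (4*m)) 0 :=
  Sm_first_vertical_derivative_general T m that h0 a t γ h i
end PHJB
end
end
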